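/- There exists a universal constant C > 0 with the following property. Let n be a natural number, S₁ ≠ S₂ subsets of Fin n, r₁, r₂ ∈ ℝ, and let h₁, h₂, ζ be real-valued functions on the hypercube {-1,1}^n such that for each i ∈ {1,2}: E[h_i·χ_{S_i}] = 0 and |h_i(x)| ≤ |r_i|·ε_i for all x, where 0 ≤ ε_i ≤ 1. Let F, Z ≥ 0 satisfy |r_i·χ_{S_i}(x) + h_i(x)| ≤ F for all x and i, and |ζ(x)| ≤ Z for all x. For a₁, a₂, b ∈ ℝ set A = max(|a₁|, |a₂|, |b|), and define ℓ = ½·E[((a₁·(r₁·χ_{S₁} + h₁) + a₂·(r₂·χ_{S₂} + h₂))² + b + ζ)²] and ℓ̃ = ½·E[((a₁·r₁·χ_{S₁} + a₂·r₂·χ_{S₂})² + b + ζ)²]. Then |ℓ − ℓ̃| ≤ C·(A⁴ + 1)·(F + Z + 1)⁴·(ε₁ + ε₂). -/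

import Mathlib

/-!
Orthogonality of `hᵢ` to `χ_{Sᵢ}` and `χ_{Sᵢ}² = 1` give `rᵢ = E[(rᵢ χ_{Sᵢ} + hᵢ) χ_{Sᵢ}]`, so
`|rᵢ| ≤ F` and hence `|hᵢ| ≤ F εᵢ`. Pointwise, with `u`, `v` the noisy and the clean
pre-activation and `w = b + ζ`, the two squared losses differ by `(u - v)(u + v)(u² + v² + 2w)`,
where `|u - v| ≤ A F (ε₁ + ε₂)`, `|u|, |v| ≤ 2 A F` and `|w| ≤ A + Z`. Averaging this pointwise
bound over the cube gives the claim with `C = 24`.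
-/

/-- The Walsh monomial `χ_S(x) = ∏ i ∈ S, x i`. -/
noncomputable def walsh {n : ℕ} (S : Finset (Fin n)) (x : Fin n → ℝ) : ℝ :=
  ∏ i ∈ S, x i

/-- Expectation over the uniform distribution on the hypercube `{-1,1}^n`. -/
noncomputable def hypE {n : ℕ} (F : (Fin n → ℝ) → ℝ) : ℝ :=
  (2 ^ n : ℝ)⁻¹ * ∑ σ : Fin n → Bool, F (fun i => if σ i then 1 else -1)

open Finset
open scoped BigOperators

section Hypercube

variable {n : ℕ}

lemma hypE_eq_expect (f : (Fin n → ℝ) → ℝ) :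
    hypE f = 𝔼 σ : Fin n → Bool, f (fun i => if σ i then 1 else -1) := by
  rw [hypE, Fintype.expect_eq_sum_div_card, div_eq_inv_mul]
  simp

lemma hypE_congr {f g : (Fin n → ℝ) → ℝ}
    (h : ∀ x, (∀ i, x i = 1 ∨ x i = -1) → f x = g x) : hypE f = hypE g := by
  simp only [hypE_eq_expect]
  exact expect_congr rfl fun σ _ => h _ fun i => by cases σ i <;> simp

lemma hypE_sub (f g : (Fin n → ℝ) → ℝ) :
    hypE (fun x => f x - g x) = hypE f - hypE g := by
  simp only [hypE_eq_expect, expect_sub_distrib]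

lemma hypE_const (c : ℝ) : hypE (fun _ : Fin n → ℝ => c) = c := by
  simp [hypE_eq_expect]

lemma abs_hypE_le {f : (Fin n → ℝ) → ℝ} {M : ℝ}
    (h : ∀ x, (∀ i, x i = 1 ∨ x i = -1) → |f x| ≤ M) : |hypE f| ≤ M := by
  rw [hypE_eq_expect]
  exact (abs_expect_le _ _).trans <|
    expect_le univ_nonempty fun σ _ => h _ fun i => by cases σ i <;> simp

lemma abs_walsh (S : Finset (Fin n)) {x : Fin n → ℝ} (hx : ∀ i, x i = 1 ∨ x i = -1) :
    |walsh S x| = 1 :=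
  (abs_prod _ _).trans <| prod_eq_one fun i _ => by rcases hx i with h | h <;> simp [h]

lemma walsh_mul_self (S : Finset (Fin n)) {x : Fin n → ℝ} (hx : ∀ i, x i = 1 ∨ x i = -1) :
    walsh S x * walsh S x = 1 := by
  rw [← abs_mul_abs_self, abs_walsh S hx, one_mul]

lemma abs_le_of_hypE_mul_walsh_eq_zero {S : Finset (Fin n)} {r F : ℝ}
    {h : (Fin n → ℝ) → ℝ} (horth : hypE (fun x => h x * walsh S x) = 0)
    (hbound : ∀ x, (∀ i, x i = 1 ∨ x i = -1) → |r * walsh S x + h x| ≤ F) :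
    |r| ≤ F := by
  have hcoeff : hypE (fun x => (r * walsh S x + h x) * walsh S x) = r := by
    calc hypE (fun x => (r * walsh S x + h x) * walsh S x)
        = hypE (fun x => (r * walsh S x + h x) * walsh S x)
            - hypE (fun x => h x * walsh S x) := by rw [horth, sub_zero]
      _ = hypE (fun _ => r) := by
          rw [← hypE_sub]
          exact hypE_congr fun x hx => by linear_combination r * walsh_mul_self S hx
      _ = r := hypE_const r
  rw [← hcoeff]
  exact abs_hypE_le fun x hx => by rw [abs_mul, abs_walsh S hx, mul_one]; exact hbound x hx

end Hypercube

lemma abs_mul_add_mul_le {a₁ a₂ p q A P Q : ℝ} (ha₁ : |a₁| ≤ A) (ha₂ : |a₂| ≤ A)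
    (hp : |p| ≤ P) (hq : |q| ≤ Q) : |a₁ * p + a₂ * q| ≤ A * (P + Q) := by
  have hA : 0 ≤ A := (abs_nonneg _).trans ha₁
  calc |a₁ * p + a₂ * q| ≤ |a₁| * |p| + |a₂| * |q| := by
        rw [← abs_mul, ← abs_mul]; exact abs_add_le _ _
    _ ≤ A * P + A * Q := by gcongr
    _ = A * (P + Q) := by ring

lemma abs_sq_add_sq_sub_sq_add_sq_le {u v w K W : ℝ} (hu : |u| ≤ K) (hv : |v| ≤ K)
    (hw : |w| ≤ W) :
    |(u ^ 2 + w) ^ 2 - (v ^ 2 + w) ^ 2| ≤ |u - v| * (2 * K) * (2 * K ^ 2 + 2 * W) := by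
  have hfactor : (u ^ 2 + w) ^ 2 - (v ^ 2 + w) ^ 2
      = (u - v) * (u + v) * (u ^ 2 + v ^ 2 + 2 * w) := by ring
  have hsum : |u + v| ≤ 2 * K := by linarith [abs_add_le u v]
  have hsq : |u ^ 2 + v ^ 2 + 2 * w| ≤ 2 * K ^ 2 + 2 * W := by
    have hu2 : u ^ 2 ≤ K ^ 2 := sq_le_sq' (abs_le.1 hu).1 (abs_le.1 hu).2
    have hv2 : v ^ 2 ≤ K ^ 2 := sq_le_sq' (abs_le.1 hv).1 (abs_le.1 hv).2
    rw [abs_le] at hw ⊢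
    constructor <;> nlinarith [sq_nonneg u, sq_nonneg v]
  have hK : 0 ≤ K := (abs_nonneg u).trans hu
  rw [hfactor, abs_mul, abs_mul]
  gcongr

lemma pow_le_pow_four_add_one {A : ℝ} (hA : 0 ≤ A) {k : ℕ} (hk : k ≤ 4) :
    A ^ k ≤ A ^ 4 + 1 := by
  rcases le_total A 1 with h | h
  · linarith [pow_le_one₀ hA h (n := k), pow_nonneg hA 4]
  · linarith [pow_le_pow_right₀ h hk]

lemma sq_mul_four_sq_add_le {A F Z : ℝ} (hA : 0 ≤ A) (hF : 0 ≤ F) (hZ : 0 ≤ Z) :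
    (A * F) ^ 2 * (4 * (A * F) ^ 2 + A + Z) ≤ 6 * (A ^ 4 + 1) * (F + Z + 1) ^ 4 := by
  set B := F + Z + 1
  have hFB : F ≤ B := by linarith
  have hZB : Z ≤ B := by linarith
  have hB : 1 ≤ B := by linarith
  have hB4 : ∀ k ≤ 4, (A ^ 4 + 1) * B ^ k ≤ (A ^ 4 + 1) * B ^ 4 := fun k hk => by
    gcongr (A ^ 4 + 1) * ?_; exact pow_le_pow_right₀ hB hk
  have h₄ : (A * F) ^ 2 * (A * F) ^ 2 ≤ (A ^ 4 + 1) * B ^ 4 := by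
    calc (A * F) ^ 2 * (A * F) ^ 2 = A ^ 4 * F ^ 4 := by ring
      _ ≤ (A ^ 4 + 1) * B ^ 4 := by gcongr; linarith
  have h₃ : (A * F) ^ 2 * A ≤ (A ^ 4 + 1) * B ^ 4 := by
    calc (A * F) ^ 2 * A = A ^ 3 * F ^ 2 := by ring
      _ ≤ (A ^ 4 + 1) * B ^ 2 := by gcongr; exact pow_le_pow_four_add_one hA (by norm_num)
      _ ≤ (A ^ 4 + 1) * B ^ 4 := hB4 2 (by norm_num)
  have h₂ : (A * F) ^ 2 * Z ≤ (A ^ 4 + 1) * B ^ 4 := by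
    calc (A * F) ^ 2 * Z = A ^ 2 * (F ^ 2 * Z) := by ring
      _ ≤ (A ^ 4 + 1) * (B ^ 2 * B) := by gcongr; exact pow_le_pow_four_add_one hA (by norm_num)
      _ = (A ^ 4 + 1) * B ^ 3 := by ring
      _ ≤ (A ^ 4 + 1) * B ^ 4 := hB4 3 (by norm_num)
  linarith

lemma abs_quadratic_neuron_loss_sub_le {a₁ a₂ b p₁ p₂ e₁ e₂ z A F Z ε₁ ε₂ : ℝ}
    (ha₁ : |a₁| ≤ A) (ha₂ : |a₂| ≤ A) (hb : |b| ≤ A)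
    (hp₁ : |p₁| ≤ F) (hp₂ : |p₂| ≤ F) (hq₁ : |p₁ + e₁| ≤ F) (hq₂ : |p₂ + e₂| ≤ F)
    (he₁ : |e₁| ≤ F * ε₁) (he₂ : |e₂| ≤ F * ε₂) (hz : |z| ≤ Z) (hε : 0 ≤ ε₁ + ε₂) :
    |((a₁ * (p₁ + e₁) + a₂ * (p₂ + e₂)) ^ 2 + b + z) ^ 2
        - ((a₁ * p₁ + a₂ * p₂) ^ 2 + b + z) ^ 2|
      ≤ 48 * (A ^ 4 + 1) * (F + Z + 1) ^ 4 * (ε₁ + ε₂) := by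
  have hA : 0 ≤ A := (abs_nonneg b).trans hb
  have hF : 0 ≤ F := (abs_nonneg p₁).trans hp₁
  have hZ : 0 ≤ Z := (abs_nonneg z).trans hz
  have hdiff : (a₁ * (p₁ + e₁) + a₂ * (p₂ + e₂)) - (a₁ * p₁ + a₂ * p₂)
      = a₁ * e₁ + a₂ * e₂ := by ring
  set K := A * (F + F)
  simp only [add_assoc _ b z]
  calc _ ≤ |a₁ * e₁ + a₂ * e₂| * (2 * K) * (2 * K ^ 2 + 2 * (A + Z)) := by
        rw [← hdiff]
        exact abs_sq_add_sq_sub_sq_add_sq_le (abs_mul_add_mul_le ha₁ ha₂ hq₁ hq₂)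
          (abs_mul_add_mul_le ha₁ ha₂ hp₁ hp₂) ((abs_add_le b z).trans (add_le_add hb hz))
    _ ≤ A * (F * ε₁ + F * ε₂) * (2 * K) * (2 * K ^ 2 + 2 * (A + Z)) := by
        gcongr
        exact abs_mul_add_mul_le ha₁ ha₂ he₁ he₂
    _ = 8 * ((A * F) ^ 2 * (4 * (A * F) ^ 2 + A + Z)) * (ε₁ + ε₂) := by ring
    _ ≤ 8 * (6 * (A ^ 4 + 1) * (F + Z + 1) ^ 4) * (ε₁ + ε₂) := by
        gcongr 8 * ?_ * _
        exact sq_mul_four_sq_add_le hA hF hZ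
    _ = 48 * (A ^ 4 + 1) * (F + Z + 1) ^ 4 * (ε₁ + ε₂) := by ring

/-- The true loss of a quadratic neuron with noisy monomial inputs is close to the
idealized loss obtained by setting the input noises to zero: there is a universal constant
`C` such that `|ℓ − ℓ̃| ≤ C·(A⁴ + 1)·(F + Z + 1)⁴·(ε₁ + ε₂)`. -/
theorem idealized_loss_close_to_true_loss :
    ∃ C : ℝ, 0 < C ∧
      ∀ (n : ℕ) (S₁ S₂ : Finset (Fin n)), S₁ ≠ S₂ →
      ∀ (r₁ r₂ ε₁ ε₂ F Z : ℝ) (h₁ h₂ ζ : (Fin n → ℝ) → ℝ),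
        0 ≤ ε₁ → ε₁ ≤ 1 → 0 ≤ ε₂ → ε₂ ≤ 1 → 0 ≤ F → 0 ≤ Z →
        hypE (fun x => h₁ x * walsh S₁ x) = 0 →
        hypE (fun x => h₂ x * walsh S₂ x) = 0 →
        (∀ x : Fin n → ℝ, (∀ i, x i = 1 ∨ x i = -1) → |h₁ x| ≤ |r₁| * ε₁) →
        (∀ x : Fin n → ℝ, (∀ i, x i = 1 ∨ x i = -1) → |h₂ x| ≤ |r₂| * ε₂) →
        (∀ x : Fin n → ℝ, (∀ i, x i = 1 ∨ x i = -1) →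
          |r₁ * walsh S₁ x + h₁ x| ≤ F) →
        (∀ x : Fin n → ℝ, (∀ i, x i = 1 ∨ x i = -1) →
          |r₂ * walsh S₂ x + h₂ x| ≤ F) →
        (∀ x : Fin n → ℝ, (∀ i, x i = 1 ∨ x i = -1) → |ζ x| ≤ Z) →
        ∀ a₁ a₂ b : ℝ,
          |(1 / 2) * hypE (fun x =>
              ((a₁ * (r₁ * walsh S₁ x + h₁ x) + a₂ * (r₂ * walsh S₂ x + h₂ x)) ^ 2
                + b + ζ x) ^ 2)
            - (1 / 2) * hypE (fun x =>
              ((a₁ * (r₁ * walsh S₁ x) + a₂ * (r₂ * walsh S₂ x)) ^ 2 + b + ζ x) ^ 2)|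
          ≤ C * ((max (max |a₁| |a₂|) |b|) ^ 4 + 1) * (F + Z + 1) ^ 4 * (ε₁ + ε₂) := by
  refine ⟨24, by norm_num, ?_⟩
  intro n S₁ S₂ _ r₁ r₂ ε₁ ε₂ F Z h₁ h₂ ζ hε₁ _ hε₂ _ _ _ horth₁ horth₂ hh₁ hh₂ hb₁ hb₂ hζ
    a₁ a₂ b
  set A := max (max |a₁| |a₂|) |b|
  have hr₁ : |r₁| ≤ F := abs_le_of_hypE_mul_walsh_eq_zero horth₁ hb₁
  have hr₂ : |r₂| ≤ F := abs_le_of_hypE_mul_walsh_eq_zero horth₂ hb₂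
  have hpointwise : ∀ x : Fin n → ℝ, (∀ i, x i = 1 ∨ x i = -1) →
      |((a₁ * (r₁ * walsh S₁ x + h₁ x) + a₂ * (r₂ * walsh S₂ x + h₂ x)) ^ 2 + b + ζ x) ^ 2
        - ((a₁ * (r₁ * walsh S₁ x) + a₂ * (r₂ * walsh S₂ x)) ^ 2 + b + ζ x) ^ 2|
        ≤ 48 * (A ^ 4 + 1) * (F + Z + 1) ^ 4 * (ε₁ + ε₂) := fun x hx =>
    abs_quadratic_neuron_loss_sub_le ((le_max_left _ _).trans (le_max_left _ _))
      ((le_max_right _ _).trans (le_max_left _ _)) (le_max_right _ _)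
      (by rwa [abs_mul, abs_walsh S₁ hx, mul_one]) (by rwa [abs_mul, abs_walsh S₂ hx, mul_one])
      (hb₁ x hx) (hb₂ x hx) ((hh₁ x hx).trans (by gcongr)) ((hh₂ x hx).trans (by gcongr))
      (hζ x hx) (add_nonneg hε₁ hε₂)
  rw [← mul_sub, ← hypE_sub, abs_mul, abs_of_pos one_half_pos]
  calc _ ≤ 1 / 2 * (48 * (A ^ 4 + 1) * (F + Z + 1) ^ 4 * (ε₁ + ε₂)) := by
        gcongr
        exact abs_hypE_le hpointwise
    _ = _ := by ring
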